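/- Let D₁, D₂ be t-structures on a triangulated category with D₁^{≤0} ⊆ D₂^{≤0}, and set H = D₁^{≥1} ∩ D₂^{≤0}. If Dᵢ is a t-structure with D₁^{≤0} ⊆ Dᵢ^{≤0} ⊆ D₂^{≤0}, then the pair (H ∩ Dᵢ^{≤0}, Dᵢ^{≥1} ∩ H) satisfies: Hom(H ∩ Dᵢ^{≤0}, Dᵢ^{≥1} ∩ H) = 0, and every object X ∈ H fits into a distinguished triangle Y → X → Z → ΣY with Y ∈ H ∩ Dᵢ^{≤0} and Z ∈ Dᵢ^{≥1} ∩ H. -/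

import Mathlib

/-!
Truncate `X ∈ H` with respect to `tᵢ`, giving `Y → X → Z → Y⟦1⟧` with `Y ∈ Dᵢ^{≤0}` and
`Z ∈ Dᵢ^{≥1}`. The inclusions of aisles give `Y ∈ D₂^{≤0}` and, dually on co-aisles,
`Z ∈ Dᵢ^{≥1} ⊆ D₁^{≥1}`. The remaining memberships `Y ∈ D₁^{≥1}` and `Z ∈ D₂^{≤0}` hold because
aisles and co-aisles are closed under extensions and shifts in the right direction, applied to
the rotations of the triangle.
-/

namespace CategoryTheory.Triangulated.TStructure

open Limits Pretriangulated

variable {C : Type*} [Category C] [Preadditive C] [HasZeroObject C] [HasShift C ℤ]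
  [∀ (n : ℤ), (shiftFunctor C n).Additive] [Pretriangulated C]

lemma ge_one_le_ge_one_of_le_zero_le {t t' : TStructure C} (h : t.le 0 ≤ t'.le 0) :
    t'.ge 1 ≤ t.ge 1 := fun X hX ↦ by
  rw [ge_iff_isGE, t.isGE_iff_orthogonal 0 1 rfl]
  intro Y f hY
  exact t'.zero' f (h Y (t.le_of_isLE Y 0)) hX

variable (t : TStructure C)

lemma isLE₃ (T : Triangle C) (hT : T ∈ distTriang C) (n : ℤ) (h₁ : t.IsLE T.obj₁ (n + 1))
    (h₂ : t.IsLE T.obj₂ n) : t.IsLE T.obj₃ n :=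
  t.isLE₂ _ (rot_of_distTriang _ hT) n h₂ (t.isLE_shift T.obj₁ (n + 1) 1 n)

lemma isGE₁ (T : Triangle C) (hT : T ∈ distTriang C) (n : ℤ) (h₂ : t.IsGE T.obj₂ n)
    (h₃ : t.IsGE T.obj₃ (n - 1)) : t.IsGE T.obj₁ n :=
  t.isGE₂ _ (inv_rot_of_distTriang _ hT) n (t.isGE_shift T.obj₃ (n - 1) (-1) n) h₂

end CategoryTheory.Triangulated.TStructure

open CategoryTheory Category Limits Pretriangulated Triangulated

variable {C : Type*} [Category C] [Preadditive C] [HasZeroObject C] [HasShift C ℤ]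
  [∀ (n : ℤ), (shiftFunctor C n).Additive] [Pretriangulated C] [IsTriangulated C]

/-- Given t-structures `t₁ ≤ tᵢ ≤ t₂` (on the level of aisles), the pair
`(H ∩ Dᵢ^{≤0}, Dᵢ^{≥1} ∩ H)` with `H = D₁^{≥1} ∩ D₂^{≤0}` satisfies the
orthogonality and decomposition axioms of a t-structure on `H`. -/
theorem stmt_5 (t₁ t₂ tᵢ : TStructure C)
    (h₁ : t₁.le 0 ≤ tᵢ.le 0) (h₂ : tᵢ.le 0 ≤ t₂.le 0) :
    (∀ (A B : C) (f : A ⟶ B),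
        ((t₁.ge 1 A ∧ t₂.le 0 A) ∧ tᵢ.le 0 A) →
        (tᵢ.ge 1 B ∧ (t₁.ge 1 B ∧ t₂.le 0 B)) → f = 0) ∧
    (∀ (X : C), (t₁.ge 1 X ∧ t₂.le 0 X) →
      ∃ (Y Z : C) (_ : (t₁.ge 1 Y ∧ t₂.le 0 Y) ∧ tᵢ.le 0 Y)
        (_ : tᵢ.ge 1 Z ∧ (t₁.ge 1 Z ∧ t₂.le 0 Z))
        (f : Y ⟶ X) (g : X ⟶ Z) (h : Z ⟶ Y⟦(1 : ℤ)⟧),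
        Triangle.mk f g h ∈ distTriang C) := by
  refine ⟨fun A B f ⟨_, hA⟩ ⟨hB, _⟩ ↦ tᵢ.zero' f hA hB, ?_⟩
  rintro X ⟨hX₁, hX₂⟩
  obtain ⟨Y, Z, hY, hZ, f, g, h, hT⟩ := tᵢ.exists_triangle X 0 1 rfl
  have hY₂ : t₂.le 0 Y := h₂ Y hY
  have hZ₁ : t₁.ge 1 Z := TStructure.ge_one_le_ge_one_of_le_zero_le h₁ Z hZ
  have hY₁ : t₁.ge 1 Y := by
    simp only [TStructure.ge_iff_isGE] at hX₁ hZ₁ ⊢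
    exact t₁.isGE₁ _ hT 1 hX₁ (t₁.isGE_of_ge Z 0 1)
  have hZ₂ : t₂.le 0 Z := by
    simp only [TStructure.le_iff_isLE] at hX₂ hY₂ ⊢
    exact t₂.isLE₃ _ hT 0 (t₂.isLE_of_le Y 0 1) hX₂
  exact ⟨Y, Z, ⟨⟨hY₁, hY₂⟩, hY⟩, ⟨hZ, hZ₁, hZ₂⟩, f, g, h, hT⟩
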